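/- Let n ≥ 3 and let CH_n be the closed helm graph obtained from the helm graph H_n by joining its n pendant vertices into a cycle C_n. Then the chromatic compound curling number of CH_n equals n² if n is even and 2(n−1)² if n is odd. -/
import Mathlib


open SimpleGraph Finset

/-- A proper vertex colouring of `G` with colour set `Fin k`. -/
def IsProperColoring {V : Type*} (G : SimpleGraph V) {k : ℕ} (C : V → Fin k) : Prop :=
  ∀ ⦃v w⦄, G.Adj v w → C v ≠ C w

/-- The chromatic number of `G`, as a natural number. -/
noncomputable def chi {V : Type*} (G : SimpleGraph V) : ℕ :=
  G.chromaticNumber.toNat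

/-- θ(cᵢ): the number of vertices receiving colour `i` under the colouring `C`. -/
def theta {V : Type*} [Fintype V] {k : ℕ} (C : V → Fin k) (i : Fin k) : ℕ :=
  (Finset.univ.filter fun v => C v = i).card

/-- The list of colour class sizes of `C`, sorted in descending order. -/
def classSizesDesc {V : Type*} [Fintype V] {k : ℕ} (C : V → Fin k) : List ℕ :=
  (List.insertionSort (· ≤ ·) (List.ofFn fun i => theta C i)).reverse

/-- A χ⁻-colouring of `G`: a proper colouring with exactly χ(G) colours such that,
greedily, the colour class of `c₁` is as large as possible, then the colour class of
`c₂` is as large as possible among the remaining vertices, and so on; equivalently,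
the descending sequence of colour class sizes is lexicographically maximal among
all proper colourings with χ(G) colours. -/
def IsChiMinusColoring {V : Type*} [Fintype V] (G : SimpleGraph V)
    (C : V → Fin (chi G)) : Prop :=
  IsProperColoring G C ∧
    ∀ C' : V → Fin (chi G), IsProperColoring G C' →
      ¬ List.Lex (· < ·) (classSizesDesc C) (classSizesDesc C')

/-- The closed helm graph `CHₙ`: the helm graph `Hₙ` (rim vertices `some (v, false)`,
central vertex `none`, pendant vertices `some (v, true)`) together with edges joining
the pendant vertices into a cycle matching the cyclic order of the rim. -/
def closedHelmG (n : ℕ) : SimpleGraph (Option (Fin n × Bool)) :=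
  SimpleGraph.fromRel (fun a b =>
    match a, b with
    | some (v, false), some (w, false) => w.val = (v.val + 1) % n
    | some (v, false), some (w, true) => w = v
    | some (v, true), some (w, true) => w.val = (v.val + 1) % n
    | none, some (_, false) => True
    | _, _ => False)

/-! ### Auxiliary lemmas -/

section Aux

lemma adj_center_rim {n : ℕ} (v : Fin n) :
    (closedHelmG n).Adj none (some (v, false)) := by
  rw [closedHelmG, SimpleGraph.fromRel_adj]
  exact ⟨by simp, Or.inl trivial⟩

lemma adj_rim_rim {n : ℕ} (v w : Fin n) (hne : v ≠ w) (h : w.val = (v.val + 1) % n) :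
    (closedHelmG n).Adj (some (v, false)) (some (w, false)) := by
  rw [closedHelmG, SimpleGraph.fromRel_adj]
  exact ⟨by simp [hne], Or.inl h⟩

lemma adj_cyc {n : ℕ} (b : Bool) (v w : Fin n) (hne : v ≠ w) (h : w.val = (v.val + 1) % n) :
    (closedHelmG n).Adj (some (v, b)) (some (w, b)) := by
  rw [closedHelmG, SimpleGraph.fromRel_adj]
  cases b
  · exact ⟨by simp [hne], Or.inl h⟩
  · exact ⟨by simp [hne], Or.inl h⟩

lemma adj_cases {n : ℕ} {a b : Option (Fin n × Bool)} (h : (closedHelmG n).Adj a b) :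
    a ≠ b ∧
    ((∃ v w : Fin n, (a = some (v,false) ∧ b = some (w,false) ∨ a = some (v,true) ∧ b = some (w,true)) ∧
        (w.val = (v.val+1)%n ∨ v.val = (w.val+1)%n)) ∨
     (∃ v : Fin n, (a = some (v,false) ∧ b = some (v,true)) ∨ (a = some (v,true) ∧ b = some (v,false))) ∨
     (∃ v : Fin n, (a = none ∧ b = some (v,false)) ∨ (a = some (v,false) ∧ b = none))) := by
  rw [closedHelmG, SimpleGraph.fromRel_adj] at h
  obtain ⟨hne, h⟩ := h
  refine ⟨hne, ?_⟩
  rcases a with _ | ⟨v, _ | _⟩ <;> rcases b with _ | ⟨w, _ | _⟩ <;> simp_all <;> aesop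

lemma succ_mod {n x : ℕ} (hn : 1 ≤ n) (hx : x < n) :
    ((x+1) % n = x + 1 ∧ x + 1 < n) ∨ (x = n - 1 ∧ (x+1) % n = 0) := by
  rcases Nat.lt_or_ge (x+1) n with h | h
  · exact Or.inl ⟨Nat.mod_eq_of_lt h, h⟩
  · have hh : x + 1 = n := by omega
    right; rw [hh, Nat.mod_self]; omega

lemma cycle_parity {n : ℕ} (hpar : n % 2 = 0) (x y : Fin n) (h : y.val = (x.val + 1) % n) :
    x.val % 2 ≠ y.val % 2 := by
  have hx := x.isLt; have hy := y.isLt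
  rcases Nat.lt_or_ge (x.val + 1) n with h2 | h2
  · rw [Nat.mod_eq_of_lt h2] at h; omega
  · have hxn : x.val + 1 = n := by omega
    rw [hxn, Nat.mod_self] at h; omega

/-- Proper 3-colouring of the closed helm graph for even `n`,
with class sizes `1, n, n` (colours `0, 1, 2`). -/
def evenCol (n : ℕ) : Option (Fin n × Bool) → Fin 3
  | none => 0
  | some (v, false) => if v.val % 2 = 0 then 1 else 2
  | some (v, true) => if v.val % 2 = 0 then 2 else 1

lemma evenCol_proper {n : ℕ} (hpar : n % 2 = 0) :
    IsProperColoring (closedHelmG n) (evenCol n) := by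
  intro a b h
  obtain ⟨hne, hcase⟩ := adj_cases h
  rcases hcase with ⟨v, w, hab, hrel⟩ | ⟨v, hab | hab⟩ | ⟨v, hab | hab⟩
  · have key : v.val % 2 ≠ w.val % 2 := by
      rcases hrel with h1 | h1
      · exact cycle_parity hpar v w h1
      · exact (cycle_parity hpar w v h1).symm
    rcases hab with ⟨rfl, rfl⟩ | ⟨rfl, rfl⟩ <;>
      · simp only [evenCol]
        split_ifs <;> first | decide | (exfalso; omega)
  · obtain ⟨rfl, rfl⟩ := hab
    simp only [evenCol]; split_ifs <;> decide
  · obtain ⟨rfl, rfl⟩ := hab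
    simp only [evenCol]; split_ifs <;> decide
  · obtain ⟨rfl, rfl⟩ := hab
    simp only [evenCol]; split_ifs <;> decide
  · obtain ⟨rfl, rfl⟩ := hab
    simp only [evenCol]; split_ifs <;> decide

/-- Proper 4-colouring of the closed helm graph for odd `n`,
with class sizes `1, 2, n-1, n-1` (colours `0, 1, 2, 3`). -/
def oddCol (n : ℕ) : Option (Fin n × Bool) → Fin 4
  | none => 1
  | some (v, false) => if v.val = n - 1 then 0 else if v.val % 2 = 0 then 2 else 3
  | some (v, true) => if v.val = n - 1 then 1 else if v.val % 2 = 0 then 3 else 2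

lemma oddCol_proper {n : ℕ} (hn : 3 ≤ n) (hpar : n % 2 = 1) :
    IsProperColoring (closedHelmG n) (oddCol n) := by
  intro a b h
  obtain ⟨hne, hcase⟩ := adj_cases h
  have cyc : ∀ x y : Fin n, y.val = (x.val + 1) % n →
      (y.val = x.val + 1 ∧ x.val + 1 < n) ∨ (x.val = n - 1 ∧ y.val = 0) := by
    intro x y h1
    have hx := x.isLt; have hy := y.isLt
    rcases succ_mod (show 1 ≤ n by omega) hx with ⟨h2, h3⟩ | ⟨h2, h3⟩
    · rw [h2] at h1; omega
    · omega
  rcases hcase with ⟨v, w, hab, hrel⟩ | ⟨v, hab | hab⟩ | ⟨v, hab | hab⟩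
  · have key : (w.val = v.val + 1 ∧ v.val + 1 < n) ∨ (v.val = n - 1 ∧ w.val = 0) ∨
        (v.val = w.val + 1 ∧ w.val + 1 < n) ∨ (w.val = n - 1 ∧ v.val = 0) := by
      rcases hrel with h1 | h1
      · rcases cyc v w h1 with h2 | h2
        · exact Or.inl h2
        · exact Or.inr (Or.inl h2)
      · rcases cyc w v h1 with h2 | h2
        · exact Or.inr (Or.inr (Or.inl h2))
        · exact Or.inr (Or.inr (Or.inr h2))
    rcases hab with ⟨rfl, rfl⟩ | ⟨rfl, rfl⟩ <;>
      · simp only [oddCol]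
        split_ifs <;> first | decide | (exfalso; omega)
  · obtain ⟨rfl, rfl⟩ := hab
    simp only [oddCol]; split_ifs <;> decide
  · obtain ⟨rfl, rfl⟩ := hab
    simp only [oddCol]; split_ifs <;> decide
  · obtain ⟨rfl, rfl⟩ := hab
    simp only [oddCol]; split_ifs <;> decide
  · obtain ⟨rfl, rfl⟩ := hab
    simp only [oddCol]; split_ifs <;> decide

lemma not_colorable_two {n : ℕ} (hn : 3 ≤ n) : ¬ (closedHelmG n).Colorable 2 := by
  rintro ⟨c⟩
  have h0 : (0 : ℕ) < n := by omega
  have h1 : (1 : ℕ) < n := by omega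
  have hadj : (closedHelmG n).Adj (some (⟨0, h0⟩, false)) (some (⟨1, h1⟩, false)) := by
    apply adj_rim_rim
    · intro h; exact absurd (congrArg Fin.val h) (by simp)
    · simp [Nat.mod_eq_of_lt (show 0 + 1 < n by omega)]
  have e1 := c.valid (adj_center_rim (n := n) ⟨0, h0⟩)
  have e2 := c.valid (adj_center_rim (n := n) ⟨1, h1⟩)
  have e3 := c.valid hadj
  revert e1 e2 e3
  generalize c none = a; generalize c (some (⟨0, h0⟩, false)) = b
  generalize c (some (⟨1, h1⟩, false)) = d
  revert a b d; decide

lemma not_colorable_three {n : ℕ} (hn : 3 ≤ n) (hpar : n % 2 = 1) :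
    ¬ (closedHelmG n).Colorable 3 := by
  rintro ⟨c⟩
  set a := c none with ha
  have h0 : (0 : ℕ) < n := by omega
  have h1 : (1 : ℕ) < n := by omega
  have hrim : ∀ v : Fin n, c (some (v, false)) ≠ a :=
    fun v => (c.valid (adj_center_rim v)).symm
  set x := c (some (⟨0, h0⟩, false)) with hx
  set y := c (some (⟨1, h1⟩, false)) with hy
  have hadj01 : (closedHelmG n).Adj (some (⟨0, h0⟩, false)) (some (⟨1, h1⟩, false)) := by
    apply adj_rim_rim
    · intro h; exact absurd (congrArg Fin.val h) (by simp)
    · simp [Nat.mod_eq_of_lt (show 0 + 1 < n by omega)]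
  have hxy : x ≠ y := c.valid hadj01
  have hxa : x ≠ a := hrim _
  have hya : y ≠ a := hrim _
  have pigeon' : ∀ a x y z : Fin 3, x ≠ y → x ≠ a → y ≠ a → z ≠ a → z = x ∨ z = y := by decide
  have pigeon : ∀ z : Fin 3, z ≠ a → z = x ∨ z = y := fun z hz => pigeon' a x y z hxy hxa hya hz
  have key : ∀ i : ℕ, ∀ h : i < n, c (some (⟨i, h⟩, false)) = if i % 2 = 0 then x else y := by
    intro i
    induction i with
    | zero => intro h; simp [hx]
    | succ j ih =>
      intro h
      have hj : j < n := by omega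
      have hadj : (closedHelmG n).Adj (some (⟨j, hj⟩, false)) (some (⟨j+1, h⟩, false)) := by
        apply adj_rim_rim
        · intro hh; exact absurd (congrArg Fin.val hh) (by simp)
        · simp [Nat.mod_eq_of_lt h]
      have hne := (c.valid hadj)
      have hz := pigeon (c (some (⟨j+1, h⟩, false))) (hrim _)
      have hprev := ih hj
      rcases Nat.even_or_odd j with hje | hjo
      · have : j % 2 = 0 := Nat.even_iff.mp hje
        rw [this] at hprev; simp at hprev
        rw [if_neg (by omega)]
        rcases hz with hz | hz
        · exact absurd (hprev.trans hz.symm) hne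
        · exact hz
      · have : j % 2 = 1 := Nat.odd_iff.mp hjo
        rw [this] at hprev; simp at hprev
        rw [if_pos (by omega)]
        rcases hz with hz | hz
        · exact hz
        · exact absurd (hprev.trans hz.symm) hne
  have hlast : n - 1 < n := by omega
  have hadjlast : (closedHelmG n).Adj (some (⟨n-1, hlast⟩, false)) (some (⟨0, h0⟩, false)) := by
    apply adj_rim_rim
    · intro h; have := congrArg Fin.val h; simp at this; omega
    · have h1' : n - 1 + 1 = n := by omega
      simp [h1', Nat.mod_self]
  have e1 := key (n-1) hlast
  have e2 := key 0 h0
  rw [if_pos (by omega)] at e1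
  rw [if_pos (by omega)] at e2
  exact c.valid hadjlast (e1.trans e2.symm)

lemma chi_even {n : ℕ} (hn : 3 ≤ n) (hpar : n % 2 = 0) : chi (closedHelmG n) = 3 := by
  have hc3 : (closedHelmG n).Colorable 3 :=
    ⟨SimpleGraph.Coloring.mk (evenCol n) (fun {v w} h => evenCol_proper hpar h)⟩
  have h1 : (closedHelmG n).chromaticNumber ≤ 3 := hc3.chromaticNumber_le
  have h2 : ¬ (closedHelmG n).chromaticNumber ≤ 2 := by
    rw [show ((2:ℕ∞)) = ((2:ℕ):ℕ∞) by norm_cast, SimpleGraph.chromaticNumber_le_iff_colorable]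
    exact not_colorable_two hn
  have h3 : (closedHelmG n).chromaticNumber = 3 :=
    le_antisymm h1 (Order.add_one_le_of_lt (not_le.mp h2))
  rw [chi, h3]; rfl

lemma chi_odd {n : ℕ} (hn : 3 ≤ n) (hpar : n % 2 = 1) : chi (closedHelmG n) = 4 := by
  have hc4 : (closedHelmG n).Colorable 4 :=
    ⟨SimpleGraph.Coloring.mk (oddCol n) (fun {v w} h => oddCol_proper hn hpar h)⟩
  have h1 : (closedHelmG n).chromaticNumber ≤ 4 := hc4.chromaticNumber_le
  have h2 : ¬ (closedHelmG n).chromaticNumber ≤ 3 := by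
    rw [show ((3:ℕ∞)) = ((3:ℕ):ℕ∞) by norm_cast, SimpleGraph.chromaticNumber_le_iff_colorable]
    exact not_colorable_three hn hpar
  have h3 : (closedHelmG n).chromaticNumber = 4 :=
    le_antisymm h1 (Order.add_one_le_of_lt (not_le.mp h2))
  rw [chi, h3]; rfl

/-! ### Counting lemmas -/

lemma theta_decomp {n k : ℕ} (C : Option (Fin n × Bool) → Fin k) (i : Fin k) :
    theta C i = (if C none = i then 1 else 0)
      + (univ.filter fun v : Fin n => C (some (v, false)) = i).card
      + (univ.filter fun v : Fin n => C (some (v, true)) = i).card := by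
  rw [theta, Finset.card_filter, Finset.card_filter, Finset.card_filter]
  rw [Fintype.sum_option, Fintype.sum_prod_type]
  have h : ∀ v : Fin n, ∑ b : Bool, (if C (some (v, b)) = i then 1 else 0)
      = (if C (some (v, false)) = i then 1 else 0) + (if C (some (v, true)) = i then 1 else 0) := by
    intro v; rw [Fintype.sum_bool]; ring
  rw [Finset.sum_congr rfl (fun v _ => h v), Finset.sum_add_distrib]
  ring

lemma sum_theta {V : Type*} [Fintype V] [DecidableEq V] {k : ℕ} (C : V → Fin k) :
    ∑ i, theta C i = Fintype.card V := by
  rw [← Finset.card_univ]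
  rw [Finset.card_eq_sum_card_fiberwise (f := C) (t := univ) (fun v _ => mem_univ _)]
  rfl

lemma fin_card_eq {n : ℕ} (p : ℕ → Prop) [DecidablePred p] :
    (univ.filter (fun v : Fin n => p v.val)).card = ((range n).filter p).card := by
  rw [Finset.card_filter, Finset.card_filter]
  exact Fin.sum_univ_eq_sum_range (fun j => if p j then 1 else 0) n

lemma card_even_range (n : ℕ) : ((range n).filter (fun k => k % 2 = 0)).card = (n+1)/2 := by
  induction n with
  | zero => simp
  | succ m ih =>
    rw [Finset.range_add_one, Finset.filter_insert]
    by_cases h : m % 2 = 0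
    · rw [if_pos h, Finset.card_insert_of_notMem (by simp)]; omega
    · rw [if_neg h]; omega

lemma card_odd_range (n : ℕ) : ((range n).filter (fun k => k % 2 = 1)).card = n/2 := by
  induction n with
  | zero => simp
  | succ m ih =>
    rw [Finset.range_add_one, Finset.filter_insert]
    by_cases h : m % 2 = 1
    · rw [if_pos h, Finset.card_insert_of_notMem (by simp)]; omega
    · rw [if_neg h]; omega

lemma card_filter_ne_last {n : ℕ} (hn : 1 ≤ n) (p : ℕ → Prop) [DecidablePred p] :
    ((range n).filter (fun j => ¬ j = n-1 ∧ p j)).card = ((range (n-1)).filter p).card := by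
  rw [show n = (n-1)+1 by omega, Finset.range_add_one, Finset.filter_insert]
  rw [if_neg (by simp)]
  congr 1
  apply Finset.filter_congr
  intro x hx
  simp only [Finset.mem_range] at hx
  exact ⟨fun h => h.2, fun h => ⟨by omega, h⟩⟩

lemma val_add_one {n : ℕ} [NeZero n] (hn : 3 ≤ n) (v : Fin n) : (v + 1).val = (v.val + 1) % n := by
  rw [Fin.val_add, Fin.val_one']
  rw [Nat.mod_eq_of_lt (show 1 < n by omega)]

lemma ne_add_one {n : ℕ} [NeZero n] (hn : 3 ≤ n) (v : Fin n) : v ≠ v + 1 := by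
  intro h
  have h2 := congrArg Fin.val h
  rw [val_add_one hn] at h2
  rcases succ_mod (show 1 ≤ n by omega) v.isLt with ⟨h3, h4⟩ | ⟨h3, h4⟩ <;> omega

lemma cyc_class_bound {n k : ℕ} (hn : 3 ≤ n) {C : Option (Fin n × Bool) → Fin k}
    (hp : IsProperColoring (closedHelmG n) C) (b : Bool) (i : Fin k) :
    2 * (univ.filter fun v : Fin n => C (some (v, b)) = i).card ≤ n := by
  haveI : NeZero n := ⟨by omega⟩
  set S := univ.filter fun v : Fin n => C (some (v, b)) = i with hS
  set T := S.image (fun v => v + 1) with hT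
  have hdisj : Disjoint S T := by
    rw [Finset.disjoint_right]
    intro w hwT hwS
    rw [hT, Finset.mem_image] at hwT
    obtain ⟨v, hvS, rfl⟩ := hwT
    have h1 : C (some (v, b)) = i := (Finset.mem_filter.mp hvS).2
    have h2 : C (some (v + 1, b)) = i := (Finset.mem_filter.mp hwS).2
    exact hp (adj_cyc b v (v+1) (ne_add_one hn v) (val_add_one hn v)) (h1.trans h2.symm)
  have hcard : T.card = S.card :=
    Finset.card_image_of_injective S (add_left_injective 1)
  have hu := Finset.card_union_of_disjoint hdisj
  have hle : (S ∪ T).card ≤ n := by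
    have := Finset.card_le_univ (S ∪ T)
    simpa using this
  omega

lemma center_class_empty {n k : ℕ} {C : Option (Fin n × Bool) → Fin k}
    (hp : IsProperColoring (closedHelmG n) C) {i : Fin k} (hc : C none = i) :
    (univ.filter fun v : Fin n => C (some (v, false)) = i) = ∅ := by
  rw [Finset.filter_eq_empty_iff]
  intro v _
  intro h
  exact hp (adj_center_rim v) (hc.trans h.symm)

lemma theta_le_even {n k : ℕ} (hn : 3 ≤ n) {C : Option (Fin n × Bool) → Fin k}
    (hp : IsProperColoring (closedHelmG n) C) (i : Fin k) : theta C i ≤ n := by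
  rw [theta_decomp]
  have hr := cyc_class_bound hn hp false i
  have hpd := cyc_class_bound hn hp true i
  by_cases hc : C none = i
  · rw [if_pos hc, center_class_empty hp hc]
    simp only [Finset.card_empty]
    omega
  · rw [if_neg hc]; omega

lemma theta_le_odd {n k : ℕ} (hn : 3 ≤ n) (hpar : n % 2 = 1)
    {C : Option (Fin n × Bool) → Fin k}
    (hp : IsProperColoring (closedHelmG n) C) (i : Fin k) : theta C i ≤ n - 1 := by
  rw [theta_decomp]
  have hr := cyc_class_bound hn hp false i
  have hpd := cyc_class_bound hn hp true i
  by_cases hc : C none = i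
  · rw [if_pos hc, center_class_empty hp hc]
    simp only [Finset.card_empty]
    omega
  · rw [if_neg hc]; omega

/-! ### Class sizes of the explicit colourings -/

lemma theta_evenCol {n : ℕ} (hn : 3 ≤ n) (hpar : n % 2 = 0) :
    theta (evenCol n) 0 = 1 ∧ theta (evenCol n) 1 = n ∧ theta (evenCol n) 2 = n := by
  refine ⟨?_, ?_, ?_⟩ <;> rw [theta_decomp]
  · have h1 : (univ.filter fun v : Fin n => evenCol n (some (v, false)) = 0) = ∅ := by
      rw [Finset.filter_eq_empty_iff]; intro v _
      simp only [evenCol]; split_ifs <;> decide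
    have h2 : (univ.filter fun v : Fin n => evenCol n (some (v, true)) = 0) = ∅ := by
      rw [Finset.filter_eq_empty_iff]; intro v _
      simp only [evenCol]; split_ifs <;> decide
    rw [h1, h2, show evenCol n none = (0:Fin 3) from rfl]
    simp
  · have h1 : (univ.filter fun v : Fin n => evenCol n (some (v, false)) = 1)
        = univ.filter (fun v : Fin n => v.val % 2 = 0) := by
      apply Finset.filter_congr; intro v _
      simp only [evenCol]; split_ifs with h <;> simp [h]
    have h2 : (univ.filter fun v : Fin n => evenCol n (some (v, true)) = 1)
        = univ.filter (fun v : Fin n => v.val % 2 = 1) := by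
      apply Finset.filter_congr; intro v _
      simp only [evenCol]; split_ifs with h <;> simp [h] <;> omega
    rw [h1, h2, show evenCol n none = (0:Fin 3) from rfl]
    rw [fin_card_eq (fun j => j % 2 = 0), fin_card_eq (fun j => j % 2 = 1)]
    rw [card_even_range, card_odd_range]
    simp only [if_neg (show ¬ (0:Fin 3) = 1 by decide)]
    omega
  · have h1 : (univ.filter fun v : Fin n => evenCol n (some (v, false)) = 2)
        = univ.filter (fun v : Fin n => v.val % 2 = 1) := by
      apply Finset.filter_congr; intro v _
      simp only [evenCol]; split_ifs with h <;> simp [h] <;> omega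
    have h2 : (univ.filter fun v : Fin n => evenCol n (some (v, true)) = 2)
        = univ.filter (fun v : Fin n => v.val % 2 = 0) := by
      apply Finset.filter_congr; intro v _
      simp only [evenCol]; split_ifs with h <;> simp [h]
    rw [h1, h2, show evenCol n none = (0:Fin 3) from rfl]
    rw [fin_card_eq (fun j => j % 2 = 1), fin_card_eq (fun j => j % 2 = 0)]
    rw [card_even_range, card_odd_range]
    simp only [if_neg (show ¬ (0:Fin 3) = 2 by decide)]
    omega

lemma theta_oddCol {n : ℕ} (hn : 3 ≤ n) (hpar : n % 2 = 1) :
    theta (oddCol n) 0 = 1 ∧ theta (oddCol n) 1 = 2 ∧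
    theta (oddCol n) 2 = n - 1 ∧ theta (oddCol n) 3 = n - 1 := by
  have hlast : ((range n).filter (fun j => j = n-1)).card = 1 := by
    rw [Finset.filter_eq']
    rw [if_pos (by simp; omega)]
    simp
  refine ⟨?_, ?_, ?_, ?_⟩ <;> rw [theta_decomp]
  · have h1 : (univ.filter fun v : Fin n => oddCol n (some (v, false)) = 0)
        = univ.filter (fun v : Fin n => v.val = n - 1) := by
      apply Finset.filter_congr; intro v _
      simp only [oddCol]; split_ifs with h h2 <;> simp [h] <;> intro hh <;> simp_all
    have h2 : (univ.filter fun v : Fin n => oddCol n (some (v, true)) = 0) = ∅ := by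
      rw [Finset.filter_eq_empty_iff]; intro v _
      simp only [oddCol]; split_ifs <;> decide
    rw [h1, h2, show oddCol n none = (1:Fin 4) from rfl]
    rw [fin_card_eq (fun j => j = n-1), hlast]
    simp
  · have h1 : (univ.filter fun v : Fin n => oddCol n (some (v, false)) = 1) = ∅ := by
      rw [Finset.filter_eq_empty_iff]; intro v _
      simp only [oddCol]; split_ifs <;> decide
    have h2 : (univ.filter fun v : Fin n => oddCol n (some (v, true)) = 1)
        = univ.filter (fun v : Fin n => v.val = n - 1) := by
      apply Finset.filter_congr; intro v _
      simp only [oddCol]; split_ifs with h h2 <;> simp [h] <;> intro hh <;> simp_all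
    rw [h1, h2, show oddCol n none = (1:Fin 4) from rfl]
    rw [fin_card_eq (fun j => j = n-1), hlast]
    simp
  · have h1 : (univ.filter fun v : Fin n => oddCol n (some (v, false)) = 2)
        = univ.filter (fun v : Fin n => ¬ v.val = n - 1 ∧ v.val % 2 = 0) := by
      apply Finset.filter_congr; intro v _
      simp only [oddCol]; split_ifs with h h2 <;> simp_all
    have h2 : (univ.filter fun v : Fin n => oddCol n (some (v, true)) = 2)
        = univ.filter (fun v : Fin n => ¬ v.val = n - 1 ∧ v.val % 2 = 1) := by
      apply Finset.filter_congr; intro v _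
      simp only [oddCol]; split_ifs with h h2 <;> simp_all <;> omega
    rw [h1, h2, show oddCol n none = (1:Fin 4) from rfl]
    simp only [if_neg (show ¬ (1:Fin 4) = 2 by decide)]
    rw [fin_card_eq (fun j => ¬ j = n-1 ∧ j % 2 = 0),
        fin_card_eq (fun j => ¬ j = n-1 ∧ j % 2 = 1)]
    rw [card_filter_ne_last (by omega), card_filter_ne_last (by omega)]
    rw [card_even_range, card_odd_range]
    omega
  · have h1 : (univ.filter fun v : Fin n => oddCol n (some (v, false)) = 3)
        = univ.filter (fun v : Fin n => ¬ v.val = n - 1 ∧ v.val % 2 = 1) := by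
      apply Finset.filter_congr; intro v _
      simp only [oddCol]; split_ifs with h h2 <;> simp_all <;> omega
    have h2 : (univ.filter fun v : Fin n => oddCol n (some (v, true)) = 3)
        = univ.filter (fun v : Fin n => ¬ v.val = n - 1 ∧ v.val % 2 = 0) := by
      apply Finset.filter_congr; intro v _
      simp only [oddCol]; split_ifs with h h2 <;> simp_all
    rw [h1, h2, show oddCol n none = (1:Fin 4) from rfl]
    simp only [if_neg (show ¬ (1:Fin 4) = 3 by decide)]
    rw [fin_card_eq (fun j => ¬ j = n-1 ∧ j % 2 = 1),
        fin_card_eq (fun j => ¬ j = n-1 ∧ j % 2 = 0)]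
    rw [card_filter_ne_last (by omega), card_filter_ne_last (by omega)]
    rw [card_even_range, card_odd_range]
    omega

/-! ### List lemmas -/

lemma lex_trichotomy : ∀ (L M : List ℕ),
    List.Lex (· < ·) L M ∨ L = M ∨ List.Lex (· < ·) M L := by
  intro L
  induction L with
  | nil =>
    intro M
    cases M with
    | nil => right; left; rfl
    | cons b M' => left; exact List.Lex.nil
  | cons a L ih =>
    intro M
    cases M with
    | nil => right; right; exact List.Lex.nil
    | cons b M' =>
      rcases Nat.lt_trichotomy a b with h | h | h
      · left; exact List.Lex.rel h
      · subst h
        rcases ih M' with h1 | h1 | h1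
        · left; exact List.Lex.cons h1
        · right; left; rw [h1]
        · right; right; exact List.Lex.cons h1
      · right; right; exact List.Lex.rel h

lemma length_eq_three' {α : Type*} {l : List α} (h : l.length = 3) :
    ∃ a b c, l = [a, b, c] := by
  rcases l with _ | ⟨a, _ | ⟨b, _ | ⟨c, _ | ⟨d, t⟩⟩⟩⟩ <;> simp_all

lemma length_eq_four' {α : Type*} {l : List α} (h : l.length = 4) :
    ∃ a b c d, l = [a, b, c, d] := by
  rcases l with _ | ⟨a, _ | ⟨b, _ | ⟨c, _ | ⟨d, _ | ⟨e, t⟩⟩⟩⟩⟩ <;> simp_all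

lemma classSizes_perm {V : Type*} [Fintype V] {k : ℕ} (C : V → Fin k) :
    (classSizesDesc C).Perm (List.ofFn fun i => theta C i) :=
  (List.reverse_perm _).trans (List.perm_insertionSort _ _)

lemma ofFn_comp_cast {k m : ℕ} (h : k = m) (f : Fin m → ℕ) :
    List.ofFn (fun i : Fin k => f (Fin.cast h i)) = List.ofFn f := by
  subst h; rfl

end Aux

theorem closedHelmGraph_chromaticCompoundCurlingNumber (n : ℕ) (hn : 3 ≤ n)
    (C : Option (Fin n × Bool) → Fin (chi (closedHelmG n)))
    (hC : IsChiMinusColoring (closedHelmG n) C) :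
    ∏ i, theta C i = if Even n then n ^ 2 else 2 * (n - 1) ^ 2 := by
  classical
  obtain ⟨hCp, hCmax⟩ := hC
  have hcardV : Fintype.card (Option (Fin n × Bool)) = 2 * n + 1 := by
    simp [Fintype.card_option]; ring
  have hsum : ∑ i, theta C i = 2 * n + 1 := by rw [sum_theta]; exact hcardV
  have hperm := classSizes_perm C
  have hsumL : (classSizesDesc C).sum = 2 * n + 1 := by
    rw [hperm.sum_eq, List.sum_ofFn, hsum]
  have hprodL : (classSizesDesc C).prod = ∏ i, theta C i := by
    rw [hperm.prod_eq, List.prod_ofFn]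
  have hmem : ∀ x ∈ classSizesDesc C, ∃ i, theta C i = x := by
    intro x hx
    rw [hperm.mem_iff, List.mem_ofFn] at hx
    obtain ⟨i, hi⟩ := hx
    exact ⟨i, hi⟩
  by_cases hpar : Even n
  · -- even case
    have hpar' : n % 2 = 0 := Nat.even_iff.mp hpar
    have hchi : chi (closedHelmG n) = 3 := chi_even hn hpar'
    -- the witness colouring
    set D : Option (Fin n × Bool) → Fin (chi (closedHelmG n)) :=
      fun v => Fin.cast hchi.symm (evenCol n v) with hD
    have hDp : IsProperColoring (closedHelmG n) D := by
      intro v w h hvw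
      exact evenCol_proper hpar' h (by
        have := congrArg Fin.val hvw
        simpa [hD, Fin.ext_iff] using this)
    have hDtheta : ∀ i : Fin (chi (closedHelmG n)),
        theta D i = theta (evenCol n) (Fin.cast hchi i) := by
      intro i
      rw [theta, theta]
      congr 1
      apply Finset.filter_congr
      intro v _
      simp [hD, Fin.ext_iff]
    have hDofFn : (List.ofFn fun i => theta D i) = List.ofFn (theta (evenCol n)) := by
      rw [show (fun i => theta D i) = (fun i : Fin (chi (closedHelmG n)) =>
        theta (evenCol n) (Fin.cast hchi i)) from funext hDtheta]
      exact ofFn_comp_cast hchi (theta (evenCol n))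
    obtain ⟨he0, he1, he2⟩ := theta_evenCol hn hpar'
    have hDlist : classSizesDesc D = [n, n, 1] := by
      rw [classSizesDesc, hDofFn]
      have : List.ofFn (theta (evenCol n)) = [1, n, n] := by
        simp [List.ofFn_succ, he0, he1, he2]
      rw [this]
      simp [List.insertionSort, List.orderedInsert, show (1:ℕ) ≤ n by omega]
    have hlex := hCmax D hDp
    rw [hDlist] at hlex
    -- L = classSizesDesc C has length 3
    have hlen : (classSizesDesc C).length = 3 := by
      rw [hperm.length_eq, List.length_ofFn, hchi]
    have hbound : ∀ x ∈ classSizesDesc C, x ≤ n := by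
      intro x hx
      obtain ⟨i, hi⟩ := hmem x hx
      rw [← hi]
      exact theta_le_even hn hCp i
    have hLeq : classSizesDesc C = [n, n, 1] := by
      rcases lex_trichotomy (classSizesDesc C) [n, n, 1] with h | h | h
      · exact absurd h hlex
      · exact h
      · exfalso
        obtain ⟨a, b, c, hL⟩ := length_eq_three' hlen
        · rw [hL] at h hsumL hbound
          have ha : a ≤ n := hbound a (by simp)
          have hb : b ≤ n := hbound b (by simp)
          simp at hsumL
          cases h with
          | rel h1 => omega
          | cons h1 =>
            cases h1 with
            | rel h2 => omega
            | cons h2 =>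
              cases h2 with
              | rel h3 => omega
              | cons h3 => cases h3
    rw [if_pos hpar, ← hprodL, hLeq]
    simp; ring
  · -- odd case
    have hpar' : n % 2 = 1 := Nat.odd_iff.mp (Nat.odd_iff.mpr (by
      rcases Nat.even_or_odd n with h | h
      · exact absurd h hpar
      · exact Nat.odd_iff.mp h))
    have hchi : chi (closedHelmG n) = 4 := chi_odd hn hpar'
    set D : Option (Fin n × Bool) → Fin (chi (closedHelmG n)) :=
      fun v => Fin.cast hchi.symm (oddCol n v) with hD
    have hDp : IsProperColoring (closedHelmG n) D := by
      intro v w h hvw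
      exact oddCol_proper hn hpar' h (by
        have := congrArg Fin.val hvw
        simpa [hD, Fin.ext_iff] using this)
    have hDtheta : ∀ i : Fin (chi (closedHelmG n)),
        theta D i = theta (oddCol n) (Fin.cast hchi i) := by
      intro i
      rw [theta, theta]
      congr 1
      apply Finset.filter_congr
      intro v _
      simp [hD, Fin.ext_iff]
    have hDofFn : (List.ofFn fun i => theta D i) = List.ofFn (theta (oddCol n)) := by
      rw [show (fun i => theta D i) = (fun i : Fin (chi (closedHelmG n)) =>
        theta (oddCol n) (Fin.cast hchi i)) from funext hDtheta]
      exact ofFn_comp_cast hchi (theta (oddCol n))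
    obtain ⟨ho0, ho1, ho2, ho3⟩ := theta_oddCol hn hpar'
    have hDlist : classSizesDesc D = [n-1, n-1, 2, 1] := by
      rw [classSizesDesc, hDofFn]
      have : List.ofFn (theta (oddCol n)) = [1, 2, n-1, n-1] := by
        have e3 : ((2 : Fin 3).succ : Fin 4) = 3 := rfl
        simp [List.ofFn_succ, ho0, ho1, ho2, ho3, e3]
      rw [this]
      simp [List.insertionSort, List.orderedInsert,
        show (2:ℕ) ≤ n - 1 by omega, show (1:ℕ) ≤ 2 by omega]
    have hlex := hCmax D hDp
    rw [hDlist] at hlex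
    have hlen : (classSizesDesc C).length = 4 := by
      rw [hperm.length_eq, List.length_ofFn, hchi]
    have hbound : ∀ x ∈ classSizesDesc C, x ≤ n - 1 := by
      intro x hx
      obtain ⟨i, hi⟩ := hmem x hx
      rw [← hi]
      exact theta_le_odd hn hpar' hCp i
    have hnozero : ∀ x ∈ classSizesDesc C, x ≠ 0 := by
      intro x hx hx0
      obtain ⟨j, hj⟩ := hmem x hx
      rw [hx0] at hj
      -- empty colour class gives a 3-colouring, contradiction
      have hnone : ∀ v, C v ≠ j := by
        intro v hv
        have : v ∈ univ.filter (fun v => C v = j) := by simp [hv]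
        rw [theta] at hj
        rw [Finset.card_eq_zero.mp hj] at this
        exact absurd this (Finset.notMem_empty v)
      -- transport to Fin 4
      have hj4 : ∀ v, Fin.cast hchi (C v) ≠ Fin.cast hchi j := by
        intro v hv
        exact hnone v (by
          have := congrArg Fin.val hv
          simpa [Fin.ext_iff] using this)
      have hcol : (closedHelmG n).Colorable 3 := by
        have hex : ∀ v, ∃ y : Fin 3, (Fin.cast hchi j).succAbove y = Fin.cast hchi (C v) :=
          fun v => Fin.exists_succAbove_eq (hj4 v)
        choose f hf using hex
        refine ⟨SimpleGraph.Coloring.mk f ?_⟩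
        intro v w hadj hvw
        apply hCp hadj
        have : Fin.cast hchi (C v) = Fin.cast hchi (C w) := by
          rw [← hf v, ← hf w, hvw]
        have := congrArg Fin.val this
        simp only [Fin.coe_cast] at this
        exact Fin.ext this
      exact not_colorable_three hn hpar' hcol
    have hLeq : classSizesDesc C = [n-1, n-1, 2, 1] := by
      rcases lex_trichotomy (classSizesDesc C) [n-1, n-1, 2, 1] with h | h | h
      · exact absurd h hlex
      · exact h
      · exfalso
        obtain ⟨a, b, c, d, hL⟩ := length_eq_four' hlen
        · rw [hL] at h hsumL hbound hnozero
          have ha : a ≤ n - 1 := hbound a (by simp)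
          have hb : b ≤ n - 1 := hbound b (by simp)
          have hc : c ≤ n - 1 := hbound c (by simp)
          have hd : d ≠ 0 := hnozero d (by simp)
          simp at hsumL
          cases h with
          | rel h1 => omega
          | cons h1 =>
            cases h1 with
            | rel h2 => omega
            | cons h2 =>
              cases h2 with
              | rel h3 => omega
              | cons h3 =>
                cases h3 with
                | rel h4 => omega
                | cons h4 => cases h4
    rw [if_neg hpar, ← hprodL, hLeq]
    have h2 : 2 ≤ n := by omega
    cases n with
    | zero => omega
    | succ m => simp [Nat.succ_sub_one]; ring
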